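/- arXiv:2410.22069 — 3 statements merged into one kernel-verified Lean document; each statement's English description precedes it below -/
import Mathlib

section
/- Let θ be a steepest-flow trajectory and t0 ≥ 0 with 𝓛(θ(t0)) < 1; assume θ(t) ≠ 0 for all t ≥ t0 and that s ↦ N(θ(s)) is differentiable on (t0, ∞). Then 𝓛(θ(t)) → 0 and N(θ(t)) → ∞ as t → ∞. -/
/-!
Along the flow, `g = 𝓛 ∘ θ` satisfies `g' = -Q²` with `Q = N_*(∇𝓛(θ))`, while `h = N ∘ θ`
satisfies `|h'| ≤ Q`. Euler's identity for the `L`-homogeneous `f`, together with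
`-log 𝓛 ≤ yᵢ f(θ, xᵢ)`, gives `L 𝓛 (-log 𝓛) ≤ Q h`. If `𝓛` stayed above some `ε > 0` after `t₀`,
then `Q h ≥ α > 0`, so `g + α log h` is nonincreasing; since `g ≥ 0` this bounds `h`, hence `Q` is
bounded below and `g' = -Q²` drives `g` negative. So the nonincreasing `g` tends to `0`, and
`-log 𝓛(θ) ≤ C N(θ)^L` then forces `N(θ) → ∞`.
-/

open Filter

noncomputable section

abbrev E (p : ℕ) : Type := EuclideanSpace ℝ (Fin p)

/-- `N` is a norm on `ℝ^p`. -/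
def IsNormOn {p : ℕ} (N : E p → ℝ) : Prop :=
  (∀ θ, 0 ≤ N θ) ∧ (∀ θ, N θ = 0 ↔ θ = 0) ∧
    (∀ (c : ℝ) (θ : E p), N (c • θ) = |c| * N θ) ∧
    ∀ θ θ' : E p, N (θ + θ') ≤ N θ + N θ'

/-- The dual norm `N_*(z) = sup {⟨z, v⟩ : N v ≤ 1}`. -/
def DualNorm {p : ℕ} (N : E p → ℝ) (z : E p) : ℝ :=
  sSup ((fun v => (inner ℝ z v : ℝ)) '' {v | N v ≤ 1})

/-- The exponential loss `𝓛(θ) = Σ_i exp (-(y_i f(θ, x_i)))`. -/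
def ExpLoss {p d m : ℕ} (f : E p → E d → ℝ) (x : Fin m → E d) (y : Fin m → ℝ)
    (θ : E p) : ℝ :=
  ∑ i, Real.exp (-(y i * f θ (x i)))

/-- A steepest-flow trajectory for the loss `𝓛` with respect to the norm `N`,
with derivative curve `θ'`. -/
def IsSteepestFlow {p : ℕ} (N : E p → ℝ) (𝓛 : E p → ℝ) (θ θ' : ℝ → E p) : Prop :=
  ∀ t, (0:ℝ) ≤ t → HasDerivAt θ (θ' t) t ∧
    (inner ℝ (θ' t) (gradient 𝓛 (θ t)) : ℝ) = -(DualNorm N (gradient 𝓛 (θ t))) ^ 2 ∧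
    N (θ' t) = DualNorm N (gradient 𝓛 (θ t))

/-- The soft margin `γ̃(θ) = -log 𝓛(θ) / N(θ)^L`. -/
def SoftMargin {p : ℕ} (N : E p → ℝ) (𝓛 : E p → ℝ) (L : ℝ) (θ : E p) : ℝ :=
  -Real.log (𝓛 θ) / N θ ^ L

/-- The hard margin `γ(θ) = (min_i y_i f(θ, x_i)) / N(θ)^L`. -/
def HardMargin {p d m : ℕ} (N : E p → ℝ) (f : E p → E d → ℝ) (x : Fin m → E d)
    (y : Fin m → ℝ) (L : ℝ) (θ : E p) : ℝ :=
  (⨅ i, y i * f θ (x i)) / N θ ^ L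

/-- The alignment `A(t) = ⟨θ(t)/N(θ(t)), -∇𝓛(θ(t))/N_*(∇𝓛(θ(t)))⟩`. -/
def FlowAlignment {p : ℕ} (N : E p → ℝ) (𝓛 : E p → ℝ) (θ : ℝ → E p) (t : ℝ) : ℝ :=
  inner ℝ ((N (θ t))⁻¹ • θ t) (-((DualNorm N (gradient 𝓛 (θ t)))⁻¹ • gradient 𝓛 (θ t)))

open Set Real

section NormOn

variable {p : ℕ} {N : E p → ℝ}

lemma IsNormOn.map_smul (hN : IsNormOn N) (c : ℝ) (v : E p) : N (c • v) = |c| * N v := hN.2.2.1 c v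

lemma IsNormOn.nonneg (hN : IsNormOn N) (v : E p) : 0 ≤ N v := hN.1 v

lemma IsNormOn.add_le (hN : IsNormOn N) (u v : E p) : N (u + v) ≤ N u + N v := hN.2.2.2 u v

lemma IsNormOn.map_zero (hN : IsNormOn N) : N 0 = 0 := (hN.2.1 0).mpr rfl

lemma IsNormOn.pos (hN : IsNormOn N) {v : E p} (hv : v ≠ 0) : 0 < N v :=
  (hN.nonneg v).lt_of_ne fun h => hv ((hN.2.1 v).mp h.symm)

lemma IsNormOn.map_neg (hN : IsNormOn N) (v : E p) : N (-v) = N v := by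
  simpa using hN.map_smul (-1) v

lemma IsNormOn.abs_sub_le (hN : IsNormOn N) (u v : E p) : |N u - N v| ≤ N (u - v) := by
  have hu := hN.add_le (u - v) v
  have hv := hN.add_le (v - u) u
  rw [sub_add_cancel] at hu hv
  rw [← neg_sub u v, hN.map_neg] at hv
  exact abs_sub_le_iff.mpr ⟨by linarith, by linarith⟩

lemma IsNormOn.convexOn (hN : IsNormOn N) : ConvexOn ℝ univ N := by
  refine ⟨convex_univ, fun u _ v _ a b ha hb _ => ?_⟩
  calc N (a • u + b • v) ≤ N (a • u) + N (b • v) := hN.add_le _ _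
    _ = a • N u + b • N v := by
      rw [hN.map_smul, hN.map_smul, abs_of_nonneg ha, abs_of_nonneg hb, smul_eq_mul, smul_eq_mul]

lemma IsNormOn.continuous (hN : IsNormOn N) : Continuous N :=
  hN.convexOn.locallyLipschitz.continuous

lemma IsNormOn.exists_pos_mul_norm_le (hN : IsNormOn N) : ∃ c > 0, ∀ v : E p, c * ‖v‖ ≤ N v := by
  obtain ⟨B, hB⟩ := (isCompact_sphere (0 : E p) 1).exists_bound_of_continuousOn
    (f := fun v => (N v)⁻¹) <| hN.continuous.continuousOn.inv₀ fun v hv =>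
      (hN.pos (ne_zero_of_mem_unit_sphere ⟨v, hv⟩)).ne'
  refine ⟨(max B 1)⁻¹, by positivity, fun v => ?_⟩
  rcases eq_or_ne v 0 with rfl | hv
  · simp [hN.map_zero]
  have hnv : 0 < ‖v‖ := norm_pos_iff.mpr hv
  have hsphere : ‖v‖⁻¹ • v ∈ Metric.sphere (0 : E p) 1 := by
    simp [norm_smul, hnv.ne']
  have hNv : N (‖v‖⁻¹ • v) = ‖v‖⁻¹ * N v := by
    rw [hN.map_smul, abs_of_pos (inv_pos.mpr hnv)]
  have hle := (le_abs_self _).trans ((hB _ hsphere).trans (le_max_left B 1))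
  rw [hNv, mul_inv, inv_inv] at hle
  rw [inv_mul_le_iff₀ (by positivity)]
  calc ‖v‖ = ‖v‖ * (N v)⁻¹ * N v := by field_simp [(hN.pos hv).ne']
    _ ≤ max B 1 * N v := by gcongr; exact hN.nonneg v

lemma IsNormOn.isCompact_unitBall (hN : IsNormOn N) : IsCompact {v | N v ≤ 1} := by
  obtain ⟨c, hc, hcN⟩ := hN.exists_pos_mul_norm_le
  refine Metric.isCompact_of_isClosed_isBounded (isClosed_le hN.continuous continuous_const) ?_
  refine (Metric.isBounded_closedBall (x := (0 : E p)) (r := c⁻¹)).subset fun v hv => ?_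
  rw [Metric.mem_closedBall, dist_zero_right, ← one_div, le_div_iff₀ hc, mul_comm]
  exact (hcN v).trans hv

lemma IsNormOn.inner_le_dualNorm_mul (hN : IsNormOn N) (z w : E p) :
    inner ℝ z w ≤ DualNorm N z * N w := by
  rcases eq_or_ne w 0 with rfl | hw
  · simp [hN.map_zero]
  have hNw := hN.pos hw
  have hmem : (N w)⁻¹ * inner ℝ z w ∈ (fun v => inner ℝ z v) '' {v | N v ≤ 1} :=
    ⟨(N w)⁻¹ • w, by simp [hN.map_smul, abs_of_pos hNw, hNw.ne'], by simp [inner_smul_right]⟩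
  have hle := le_csSup (hN.isCompact_unitBall.bddAbove_image
    (continuous_const.inner continuous_id).continuousOn) hmem
  rwa [inv_mul_le_iff₀ hNw, mul_comm] at hle

lemma IsNormOn.abs_le_of_hasDerivAt_comp (hN : IsNormOn N) {θ : ℝ → E p} {v : E p} {a t : ℝ}
    (hθ : HasDerivAt θ v t) (hNθ : HasDerivAt (fun s => N (θ s)) a t) : |a| ≤ N v := by
  refine le_of_tendsto_of_tendsto (hasDerivAt_iff_tendsto_slope.mp hNθ).abs
    ((hN.continuous.tendsto v).comp (hasDerivAt_iff_tendsto_slope.mp hθ))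
    (Eventually.of_forall fun s => ?_)
  simp only [Function.comp_apply, slope, vsub_eq_sub, smul_eq_mul, abs_mul, hN.map_smul]
  exact mul_le_mul_of_nonneg_left (hN.abs_sub_le _ _) (abs_nonneg _)

end NormOn

section ExpLoss

variable {p d m : ℕ} {f : E p → E d → ℝ} {x : Fin m → E d} {y : Fin m → ℝ}

lemma exp_le_expLoss (θ : E p) (i : Fin m) : exp (-(y i * f θ (x i))) ≤ ExpLoss f x y θ :=
  Finset.single_le_sum (f := fun i => exp (-(y i * f θ (x i)))) (fun _ _ => (exp_pos _).le)
    (Finset.mem_univ i)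

lemma expLoss_pos (hm : 0 < m) (θ : E p) : 0 < ExpLoss f x y θ :=
  (exp_pos _).trans_le (exp_le_expLoss θ ⟨0, hm⟩)

lemma neg_log_expLoss_le (θ : E p) (i : Fin m) : -log (ExpLoss f x y θ) ≤ y i * f θ (x i) := by
  have h := log_le_log (exp_pos _) (exp_le_expLoss (f := f) (x := x) (y := y) θ i)
  rw [log_exp] at h
  linarith

lemma differentiable_expLoss (hf : ∀ x', Differentiable ℝ fun θ => f θ x') :
    Differentiable ℝ (ExpLoss f x y) := by
  unfold ExpLoss
  fun_prop

/-- Euler's identity for the homogeneous `f`, read off from the derivative of `c ↦ 𝓛 (c • θ)`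
at `c = 1`. -/
lemma inner_gradient_expLoss_self (hf : ∀ x', Differentiable ℝ fun θ => f θ x') {L : ℝ}
    (hhom : ∀ c : ℝ, 0 < c → ∀ (θ : E p) (x' : E d), f (c • θ) x' = c ^ L * f θ x')
    (θ : E p) :
    inner ℝ (gradient (ExpLoss f x y) θ) θ =
      -(L * ∑ i, y i * f θ (x i) * exp (-(y i * f θ (x i)))) := by
  rw [inner_gradient_left]
  set a : Fin m → ℝ := fun i => y i * f θ (x i)
  have hray : HasDerivAt (fun c : ℝ => ExpLoss f x y (c • θ)) (fderiv ℝ (ExpLoss f x y) θ θ) 1 :=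
    (differentiable_expLoss hf θ).hasFDerivAt.comp_hasDerivAt_of_eq 1
      (by simpa using (hasDerivAt_id (1 : ℝ)).smul_const θ) (one_smul ℝ θ).symm
  have hpow : HasDerivAt (fun c : ℝ => ∑ i, exp (-(c ^ L * a i)))
      (-(L * ∑ i, a i * exp (-a i))) 1 := by
    have hterm (i : Fin m) : HasDerivAt (fun c : ℝ => exp (-(c ^ L * a i)))
        (exp (-(1 ^ L * a i)) * -(L * 1 ^ (L - 1) * a i)) 1 :=
      ((hasDerivAt_rpow_const (Or.inl one_ne_zero)).mul_const (a i)).neg.exp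
    refine (HasDerivAt.fun_sum fun i (_ : i ∈ Finset.univ) => hterm i).congr_deriv ?_
    simp only [one_rpow, one_mul, mul_one, Finset.mul_sum, ← Finset.sum_neg_distrib]
    exact Finset.sum_congr rfl fun i _ => by ring
  have heq : (fun c : ℝ => ExpLoss f x y (c • θ)) =ᶠ[nhds 1]
      fun c => ∑ i, exp (-(c ^ L * a i)) := by
    filter_upwards [eventually_gt_nhds one_pos] with c hc
    simp only [ExpLoss, hhom c hc, a, mul_left_comm]
  exact hray.unique (hpow.congr_of_eventuallyEq heq)

lemma mul_expLoss_mul_neg_log_le {N : E p → ℝ} (hN : IsNormOn N)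
    (hf : ∀ x', Differentiable ℝ fun θ => f θ x') {L : ℝ} (hL : 0 ≤ L)
    (hhom : ∀ c : ℝ, 0 < c → ∀ (θ : E p) (x' : E d), f (c • θ) x' = c ^ L * f θ x')
    (θ : E p) :
    L * (ExpLoss f x y θ * -log (ExpLoss f x y θ)) ≤
      DualNorm N (gradient (ExpLoss f x y) θ) * N θ := by
  calc L * (ExpLoss f x y θ * -log (ExpLoss f x y θ))
        = L * ∑ i, -log (ExpLoss f x y θ) * exp (-(y i * f θ (x i))) := by
          rw [← Finset.mul_sum, mul_comm (ExpLoss f x y θ)]; rfl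
    _ ≤ L * ∑ i, y i * f θ (x i) * exp (-(y i * f θ (x i))) := by
          gcongr with i; exact neg_log_expLoss_le θ i
    _ = inner ℝ (gradient (ExpLoss f x y) θ) (-θ) := by
          rw [inner_neg_right, inner_gradient_expLoss_self hf hhom, neg_neg]
    _ ≤ DualNorm N (gradient (ExpLoss f x y) θ) * N θ := by
          simpa only [hN.map_neg] using hN.inner_le_dualNorm_mul _ (-θ)

lemma exists_neg_log_expLoss_le_mul_rpow (hm : 0 < m) {N : E p → ℝ} (hN : IsNormOn N)
    (hf : ∀ x', Continuous fun θ => f θ x') {L : ℝ}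
    (hhom : ∀ c : ℝ, 0 < c → ∀ (θ : E p) (x' : E d), f (c • θ) x' = c ^ L * f θ x') :
    ∃ C > 0, ∀ θ, θ ≠ 0 → -log (ExpLoss f x y θ) ≤ C * N θ ^ L := by
  let i : Fin m := ⟨0, hm⟩
  obtain ⟨B, hB⟩ := hN.isCompact_unitBall.exists_bound_of_continuousOn (hf (x i)).continuousOn
  refine ⟨max (|y i| * B) 1, by positivity, fun θ hθ => ?_⟩
  have hNθ := hN.pos hθ
  set v := (N θ)⁻¹ • θ
  have hv : N v ≤ 1 := by simp [v, hN.map_smul, abs_of_pos hNθ, hNθ.ne']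
  have hfθ : f θ (x i) = N θ ^ L * f v (x i) := by
    rw [← hhom _ hNθ, smul_inv_smul₀ hNθ.ne']
  calc -log (ExpLoss f x y θ) ≤ y i * f θ (x i) := neg_log_expLoss_le θ i
    _ ≤ |y i| * |f θ (x i)| := (le_abs_self _).trans (abs_mul _ _).le
    _ = N θ ^ L * (|y i| * ‖f v (x i)‖) := by
          rw [hfθ, abs_mul, abs_of_pos (rpow_pos_of_pos hNθ L), norm_eq_abs]; ring
    _ ≤ N θ ^ L * (|y i| * B) := by gcongr; exact hB v hv
    _ ≤ max (|y i| * B) 1 * N θ ^ L := by rw [mul_comm]; gcongr; exact le_max_left _ _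

end ExpLoss

section RealDecay

variable {g g' h h' Q : ℝ → ℝ} {t₀ α δ : ℝ}

lemma antitoneOn_Ici_of_hasDerivAt_nonpos (hc : ContinuousOn g (Ici t₀))
    (hd : ∀ t ∈ Ioi t₀, HasDerivAt g (g' t) t) (hn : ∀ t ∈ Ioi t₀, g' t ≤ 0) :
    AntitoneOn g (Ici t₀) :=
  antitoneOn_of_hasDerivWithinAt_nonpos (convex_Ici t₀) hc
    (by simpa using fun t ht => (hd t ht).hasDerivWithinAt) (by simpa using hn)

lemma le_sub_mul_of_hasDerivAt_le (hd : ∀ t ∈ Ici t₀, HasDerivAt g (g' t) t)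
    (hδ : ∀ t ∈ Ioi t₀, g' t ≤ -δ) {t : ℝ} (ht : t₀ ≤ t) : g t ≤ g t₀ - δ * (t - t₀) := by
  have hanti : AntitoneOn (fun s => g s + δ * (s - t₀)) (Ici t₀) := by
    refine antitoneOn_Ici_of_hasDerivAt_nonpos (g' := fun s => g' s + δ * 1)
      (fun s hs => ((hd s hs).continuousAt.add (by fun_prop)).continuousWithinAt)
      (fun s hs => (hd s (mem_Ici_of_Ioi hs)).add (((hasDerivAt_id s).sub_const t₀).const_mul δ))
      fun s hs => by linarith [hδ s hs]
  have := hanti self_mem_Ici ht ht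
  simp only [sub_self, mul_zero, add_zero] at this
  linarith

lemma antitoneOn_add_mul_log (hα : 0 ≤ α) (hg : ∀ t ∈ Ici t₀, HasDerivAt g (-Q t ^ 2) t)
    (hh_cont : ContinuousOn h (Ici t₀)) (hh : ∀ t ∈ Ioi t₀, HasDerivAt h (h' t) t)
    (hh_pos : ∀ t ∈ Ici t₀, 0 < h t) (hh' : ∀ t ∈ Ioi t₀, |h' t| ≤ Q t)
    (hQh : ∀ t ∈ Ici t₀, α ≤ Q t * h t) :
    AntitoneOn (fun t => g t + α * log (h t)) (Ici t₀) := by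
  refine antitoneOn_Ici_of_hasDerivAt_nonpos (g' := fun t => -Q t ^ 2 + α * (h' t / h t))
    (fun t ht => (hg t ht).continuousAt.continuousWithinAt.add
      (continuousWithinAt_const.mul ((hh_cont t ht).log (hh_pos t ht).ne')))
    (fun t ht => (hg t (mem_Ici_of_Ioi ht)).add
      (((hh t ht).log (hh_pos t (mem_Ici_of_Ioi ht)).ne').const_mul α))
    fun t ht => ?_
  have hpos := hh_pos t (mem_Ici_of_Ioi ht)
  have hQ_nonneg := (abs_nonneg _).trans (hh' t ht)
  have : α * (h' t / h t) ≤ Q t ^ 2 := by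
    rw [mul_div_assoc', div_le_iff₀ hpos]
    calc α * h' t ≤ α * |h' t| := by gcongr; exact le_abs_self _
      _ ≤ Q t * h t * Q t := by gcongr; exacts [hQh t (mem_Ici_of_Ioi ht), hh' t ht]
      _ = Q t ^ 2 * h t := by ring
  linarith

lemma exists_neg_of_hasDerivAt_neg_sq (hα : 0 < α) (hg : ∀ t ∈ Ici t₀, HasDerivAt g (-Q t ^ 2) t)
    (hh_cont : ContinuousOn h (Ici t₀)) (hh : ∀ t ∈ Ioi t₀, HasDerivAt h (h' t) t)
    (hh_pos : ∀ t ∈ Ici t₀, 0 < h t) (hh' : ∀ t ∈ Ioi t₀, |h' t| ≤ Q t)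
    (hQh : ∀ t ∈ Ici t₀, α ≤ Q t * h t) : ∃ t ≥ t₀, g t < 0 := by
  by_contra! hg_nonneg
  set M := exp (g t₀ / α) * h t₀
  have hM : ∀ t ∈ Ici t₀, h t ≤ M := by
    intro t ht
    have hmono := antitoneOn_add_mul_log hα.le hg hh_cont hh hh_pos hh' hQh self_mem_Ici ht ht
    have hlog : log (h t) ≤ g t₀ / α + log (h t₀) := by
      rw [div_add' _ _ _ hα.ne', le_div_iff₀ hα]
      nlinarith [hg_nonneg t ht]
    calc h t = exp (log (h t)) := (exp_log (hh_pos t ht)).symm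
      _ ≤ exp (g t₀ / α + log (h t₀)) := exp_le_exp.mpr hlog
      _ = M := by rw [exp_add, exp_log (hh_pos t₀ self_mem_Ici)]
  have hM_pos : 0 < M := mul_pos (exp_pos _) (hh_pos t₀ self_mem_Ici)
  have hQ : ∀ t ∈ Ioi t₀, -Q t ^ 2 ≤ -(α / M) ^ 2 := fun t ht => by
    have hαM : α / M ≤ Q t := by
      rw [div_le_iff₀ hM_pos]
      calc α ≤ Q t * h t := hQh t (mem_Ici_of_Ioi ht)
        _ ≤ Q t * M := by
          gcongr
          exacts [(abs_nonneg _).trans (hh' t ht), hM t (mem_Ici_of_Ioi ht)]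
    have := pow_le_pow_left₀ (by positivity) hαM 2
    linarith
  have hδ : 0 < (α / M) ^ 2 := by positivity
  have hT : t₀ ≤ t₀ + (g t₀ + 1) / (α / M) ^ 2 :=
    le_add_of_nonneg_right (div_nonneg (by linarith [hg_nonneg t₀ le_rfl]) hδ.le)
  have hdecay := le_sub_mul_of_hasDerivAt_le hg hQ hT
  rw [add_sub_cancel_left, mul_div_cancel₀ _ hδ.ne'] at hdecay
  linarith [hg_nonneg _ hT]

end RealDecay

namespace IsSteepestFlow

variable {p : ℕ} {N 𝓛 : E p → ℝ} {θ θ' : ℝ → E p}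

lemma hasDerivAt_comp (hflow : IsSteepestFlow N 𝓛 θ θ') (h𝓛 : Differentiable ℝ 𝓛) {t : ℝ}
    (ht : 0 ≤ t) :
    HasDerivAt (fun s => 𝓛 (θ s)) (-DualNorm N (gradient 𝓛 (θ t)) ^ 2) t := by
  obtain ⟨hθ, hinner, -⟩ := hflow t ht
  have h := (h𝓛 (θ t)).hasFDerivAt.comp_hasDerivAt t hθ
  rwa [← inner_gradient_left, real_inner_comm, hinner] at h

lemma antitoneOn_comp (hflow : IsSteepestFlow N 𝓛 θ θ') (h𝓛 : Differentiable ℝ 𝓛) :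
    AntitoneOn (fun s => 𝓛 (θ s)) (Ici 0) :=
  antitoneOn_Ici_of_hasDerivAt_nonpos
    (fun t ht => (hflow.hasDerivAt_comp h𝓛 ht).continuousAt.continuousWithinAt)
    (fun t ht => hflow.hasDerivAt_comp h𝓛 (le_of_lt ht)) fun t _ => by
      simp only [neg_nonpos]; positivity

variable {d m : ℕ} {f : E p → E d → ℝ} {x : Fin m → E d} {y : Fin m → ℝ} {L t₀ : ℝ}

lemma exists_expLoss_lt (hflow : IsSteepestFlow N (ExpLoss f x y) θ θ') (hN : IsNormOn N)
    (hf : ∀ x', Differentiable ℝ fun θ => f θ x') (hL : 0 < L)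
    (hhom : ∀ c : ℝ, 0 < c → ∀ (θ : E p) (x' : E d), f (c • θ) x' = c ^ L * f θ x')
    (ht₀ : 0 ≤ t₀) (hsep : ExpLoss f x y (θ t₀) < 1) (hθ : ∀ t, t₀ ≤ t → θ t ≠ 0)
    (hNθ : ∀ t ∈ Ioi t₀, DifferentiableAt ℝ (fun s => N (θ s)) t) {ε : ℝ} (hε : 0 < ε) :
    ∃ t ≥ t₀, ExpLoss f x y (θ t) < ε := by
  by_contra! hge
  set g := fun t => ExpLoss f x y (θ t)
  have hg_pos : ∀ t ∈ Ici t₀, 0 < g t := fun t ht => hε.trans_le (hge t ht)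
  have hβ : 0 < -log (g t₀) := neg_pos.mpr (log_neg (hg_pos t₀ self_mem_Ici) hsep)
  have hQh : ∀ t ∈ Ici t₀, L * (ε * -log (g t₀)) ≤
      DualNorm N (gradient (ExpLoss f x y) (θ t)) * N (θ t) := fun t ht =>
    calc L * (ε * -log (g t₀)) ≤ L * (g t * -log (g t)) := by
          have hgt : g t ≤ g t₀ := hflow.antitoneOn_comp (differentiable_expLoss hf)
            (mem_Ici.mpr ht₀) (mem_Ici.mpr (ht₀.trans ht)) ht
          have hlog := log_le_log (hg_pos t ht) hgt
          gcongr
          exacts [(hg_pos t ht).le, hge t ht]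
      _ ≤ _ := mul_expLoss_mul_neg_log_le hN hf hL.le hhom (θ t)
  obtain ⟨t, ht, hneg⟩ := exists_neg_of_hasDerivAt_neg_sq (mul_pos hL (mul_pos hε hβ))
    (fun t ht => hflow.hasDerivAt_comp (differentiable_expLoss hf) (ht₀.trans ht))
    (fun t ht => (hN.continuous.continuousAt.comp
      (hflow t (ht₀.trans ht)).1.continuousAt).continuousWithinAt)
    (fun t ht => (hNθ t ht).hasDerivAt)
    (fun t ht => hN.pos (hθ t ht))
    (fun t ht => (hflow t (ht₀.trans (le_of_lt ht))).2.2 ▸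
      hN.abs_le_of_hasDerivAt_comp (hflow t (ht₀.trans (le_of_lt ht))).1 (hNθ t ht).hasDerivAt)
    hQh
  exact (hneg.trans (hg_pos t ht)).false

lemma tendsto_expLoss (hflow : IsSteepestFlow N (ExpLoss f x y) θ θ') (hm : 0 < m)
    (hN : IsNormOn N) (hf : ∀ x', Differentiable ℝ fun θ => f θ x') (hL : 0 < L)
    (hhom : ∀ c : ℝ, 0 < c → ∀ (θ : E p) (x' : E d), f (c • θ) x' = c ^ L * f θ x')
    (ht₀ : 0 ≤ t₀) (hsep : ExpLoss f x y (θ t₀) < 1) (hθ : ∀ t, t₀ ≤ t → θ t ≠ 0)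
    (hNθ : ∀ t ∈ Ioi t₀, DifferentiableAt ℝ (fun s => N (θ s)) t) :
    Tendsto (fun t => ExpLoss f x y (θ t)) atTop (nhdsWithin 0 (Ioi 0)) := by
  have hpos : ∀ t, 0 < ExpLoss f x y (θ t) := fun t => expLoss_pos hm (θ t)
  refine tendsto_nhdsWithin_iff.mpr ⟨tendsto_order.mpr ⟨fun a ha =>
    Eventually.of_forall fun t => ha.trans (hpos t), fun ε hε => ?_⟩, Eventually.of_forall hpos⟩
  obtain ⟨T, hT, hlt⟩ := hflow.exists_expLoss_lt hN hf hL hhom ht₀ hsep hθ hNθ hε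
  filter_upwards [eventually_ge_atTop T] with t ht
  exact (hflow.antitoneOn_comp (differentiable_expLoss hf) (mem_Ici.mpr (ht₀.trans hT))
    (mem_Ici.mpr (ht₀.trans (hT.trans ht))) ht).trans_lt hlt

end IsSteepestFlow

lemma tendsto_atTop_of_neg_log_le_mul_rpow {g h : ℝ → ℝ} {C L : ℝ} (hC : 0 < C) (hL : 0 < L)
    (hg : Tendsto g atTop (nhdsWithin 0 (Ioi 0)))
    (hgh : ∀ᶠ t in atTop, -log (g t) ≤ C * h t ^ L) (hh : ∀ t, 0 ≤ h t) :
    Tendsto h atTop atTop := by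
  have hlog : Tendsto (fun t => -log (g t)) atTop atTop :=
    tendsto_neg_atBot_atTop.comp (tendsto_log_nhdsGT_zero.comp hg)
  have hpow : Tendsto (fun t => h t ^ L) atTop atTop := by
    refine tendsto_atTop_mono' _ ?_ (hlog.atTop_div_const hC)
    filter_upwards [hgh] with t ht
    rwa [div_le_iff₀' hC]
  refine ((tendsto_rpow_atTop (inv_pos.mpr hL)).comp hpow).congr fun t => ?_
  exact rpow_rpow_inv (hh t) hL.ne'

theorem stmt_4_general {p d m : ℕ} (hm : 0 < m)
    (x : Fin m → E d) (y : Fin m → ℝ)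
    (L : ℝ) (hL : 0 < L) (f : E p → E d → ℝ)
    (hf : ∀ x' : E d, ContDiff ℝ 1 fun θ => f θ x')
    (hhom : ∀ c : ℝ, 0 < c → ∀ (θ : E p) (x' : E d), f (c • θ) x' = c ^ L * f θ x')
    (N : E p → ℝ) (hN : IsNormOn N)
    (θ θ' : ℝ → E p) (hflow : IsSteepestFlow N (ExpLoss f x y) θ θ')
    (t0 : ℝ) (ht0 : 0 ≤ t0) (hsep : ExpLoss f x y (θ t0) < 1)
    (hθ0 : ∀ t, t0 ≤ t → θ t ≠ 0)
    (hNdiff : ∀ t ∈ Set.Ioi t0, DifferentiableAt ℝ (fun s => N (θ s)) t) :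
    Tendsto (fun t => ExpLoss f x y (θ t)) atTop (nhds 0) ∧
    Tendsto (fun t => N (θ t)) atTop atTop := by
  have hloss := hflow.tendsto_expLoss hm hN (fun x' => (hf x').differentiable one_ne_zero) hL
    hhom ht0 hsep hθ0 hNdiff
  obtain ⟨C, hC, hbound⟩ :=
    exists_neg_log_expLoss_le_mul_rpow (y := y) hm hN (fun x' => (hf x').continuous) hhom
  refine ⟨hloss.mono_right nhdsWithin_le_nhds,
    tendsto_atTop_of_neg_log_le_mul_rpow hC hL hloss ?_ fun t => hN.nonneg (θ t)⟩
  filter_upwards [eventually_ge_atTop t0] with t ht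
  exact hbound (θ t) (hθ0 t ht)

theorem stmt_4 {p d m : ℕ} (hp : 0 < p) (hd : 0 < d) (hm : 0 < m)
    (x : Fin m → E d) (y : Fin m → ℝ) (hy : ∀ i, y i = 1 ∨ y i = -1)
    (L : ℝ) (hL : 0 < L) (f : E p → E d → ℝ)
    (hf : ∀ x' : E d, ContDiff ℝ 1 fun θ => f θ x')
    (hhom : ∀ c : ℝ, 0 < c → ∀ (θ : E p) (x' : E d), f (c • θ) x' = c ^ L * f θ x')
    (N : E p → ℝ) (hN : IsNormOn N)
    (θ θ' : ℝ → E p) (hflow : IsSteepestFlow N (ExpLoss f x y) θ θ')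
    (t0 : ℝ) (ht0 : 0 ≤ t0) (hsep : ExpLoss f x y (θ t0) < 1)
    (hθ0 : ∀ t, t0 ≤ t → θ t ≠ 0)
    (hNdiff : ∀ t ∈ Set.Ioi t0, DifferentiableAt ℝ (fun s => N (θ s)) t) :
    Tendsto (fun t => ExpLoss f x y (θ t)) atTop (nhds 0) ∧
    Tendsto (fun t => N (θ t)) atTop atTop :=
  stmt_4_general hm x y L hL f hf hhom N hN θ θ' hflow t0 ht0 hsep hθ0 hNdiff
end
end

section
/- Let Φ : ℝ → ℝ be a continuously differentiable bijection with Φ'(u) > 0 for all u ∈ ℝ and such that u ↦ u·Φ'(u) is nondecreasing on [0, ∞). Let θ ∈ ℝ^p satisfy 𝓛_Φ(θ) < exp(−Φ(0)), and let M ∈ ℝ be the unique real number with Φ(M) = log(1/𝓛_Φ(θ)). Then ⟨θ, −∇𝓛_Φ(θ)⟩ = L · Σ_{i=1}^m exp(−Φ(y_i f(θ, x_i))) · Φ'(y_i f(θ, x_i)) · y_i f(θ, x_i) ≥ L · 𝓛_Φ(θ) · Φ'(M) · M. -/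
open Filter

noncomputable section

/-- The Φ-loss `𝓛_Φ(θ) = Σ_i exp (-Φ (y_i f(θ, x_i)))`. -/
def PhiLoss {p d m : ℕ} (Φ : ℝ → ℝ) (f : E p → E d → ℝ) (x : Fin m → E d)
    (y : Fin m → ℝ) (θ : E p) : ℝ :=
  ∑ i, Real.exp (-Φ (y i * f θ (x i)))

/-- The Φ-soft margin `γ̃_Φ(θ) = Φ⁻¹(log (1/𝓛_Φ(θ))) / N(θ)^L`. -/
def PhiSoftMargin {p : ℕ} (N : E p → ℝ) (Φ : ℝ → ℝ) (𝓛 : E p → ℝ) (L : ℝ)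
    (θ : E p) : ℝ :=
  Function.invFun Φ (Real.log (1 / 𝓛 θ)) / N θ ^ L

/-! Differentiating `c ↦ f(cθ, x) = c ^ L f(θ, x)` at `c = 1` gives Euler's identity
`⟨θ, ∇f(θ, x)⟩ = L f(θ, x)`, and the chain rule turns it into the formula for
`⟨θ, -∇𝓛_Φ(θ)⟩`. For the bound, every summand of `𝓛_Φ(θ) = exp(-Φ(M))` is at most the whole
sum, so each margin `y_i f(θ, x_i)` is at least `M`, and `M > 0` because
`𝓛_Φ(θ) < exp(-Φ(0))`; monotonicity of `u ↦ u Φ'(u)` on `[0, ∞)` then bounds every term below. -/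

open Finset

theorem HasFDerivAt.apply_self_of_homogeneous {F G : Type*} [NormedAddCommGroup F]
    [NormedSpace ℝ F] [NormedAddCommGroup G] [NormedSpace ℝ G] {g : F → G} {g' : F →L[ℝ] G}
    {θ : F} {L : ℝ} (hg : HasFDerivAt g g' θ)
    (hhom : ∀ c : ℝ, 0 < c → g (c • θ) = c ^ L • g θ) :
    g' θ = L • g θ := by
  have hline : HasDerivAt (fun s : ℝ => g (s • θ)) (g' θ) 1 := by
    have hsmul : HasDerivAt (fun s : ℝ => s • θ) θ 1 := by
      simpa using (hasDerivAt_id (1 : ℝ)).smul_const θ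
    exact (one_smul ℝ θ ▸ hg).comp_hasDerivAt 1 hsmul
  have hpow : HasDerivAt (fun s : ℝ => s ^ L • g θ) (L • g θ) 1 := by
    simpa using (Real.hasDerivAt_rpow_const (x := 1) (p := L) (Or.inl one_ne_zero)).smul_const
      (g θ)
  have heq : (fun s : ℝ => g (s • θ)) =ᶠ[nhds 1] fun s => s ^ L • g θ :=
    eventually_of_mem (Ioi_mem_nhds one_pos) fun s hs => hhom s hs
  exact hline.unique (hpow.congr_of_eventuallyEq heq)

theorem fderiv_phiLoss_apply_self {p d m : ℕ} {Φ : ℝ → ℝ} {f : E p → E d → ℝ}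
    {x : Fin m → E d} {y : Fin m → ℝ} {θ : E p} {L : ℝ} (hΦ : Differentiable ℝ Φ)
    (hf : ∀ i, DifferentiableAt ℝ (fun θ => f θ (x i)) θ)
    (hhom : ∀ c : ℝ, 0 < c → ∀ i, f (c • θ) (x i) = c ^ L * f θ (x i)) :
    fderiv ℝ (PhiLoss Φ f x y) θ θ =
      -(L * ∑ i, Real.exp (-Φ (y i * f θ (x i))) * deriv Φ (y i * f θ (x i)) *
        (y i * f θ (x i))) := by
  have hterm : ∀ i, HasFDerivAt (fun θ => Real.exp (-Φ (y i * f θ (x i))))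
      (Real.exp (-Φ (y i * f θ (x i))) • -(deriv Φ (y i * f θ (x i)) •
        (y i • fderiv ℝ (fun θ => f θ (x i)) θ))) θ := fun i =>
    (((hΦ _).hasDerivAt.comp_hasFDerivAt θ ((hf i).hasFDerivAt.const_mul (y i))).neg).exp
  have hsum := HasFDerivAt.fun_sum (u := univ) fun i _ => hterm i
  have heuler : ∀ i, fderiv ℝ (fun θ => f θ (x i)) θ θ = L * f θ (x i) := fun i =>
    (hf i).hasFDerivAt.apply_self_of_homogeneous fun c hc => hhom c hc i
  rw [show PhiLoss Φ f x y = fun θ => ∑ i, Real.exp (-Φ (y i * f θ (x i))) from rfl, hsum.fderiv]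
  simp only [smul_neg, _root_.sum_apply, neg_apply, smul_apply, heuler, smul_eq_mul, mul_sum,
    ← sum_neg_distrib]
  exact sum_congr rfl fun i _ => by ring

theorem sum_exp_neg_mul_le_of_monotoneOn {ι : Type*} [Fintype ι] {Φ ψ : ℝ → ℝ}
    (hΦ : StrictMono Φ) (hψ : MonotoneOn ψ (Set.Ici 0)) {u : ι → ℝ} {M : ℝ}
    (hsep : ∑ i, Real.exp (-Φ (u i)) < Real.exp (-Φ 0))
    (hM : Φ M = Real.log (1 / ∑ i, Real.exp (-Φ (u i)))) :
    (∑ i, Real.exp (-Φ (u i))) * ψ M ≤ ∑ i, Real.exp (-Φ (u i)) * ψ (u i) := by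
  rw [sum_mul]
  refine sum_le_sum fun i _ => mul_le_mul_of_nonneg_left ?_ (Real.exp_pos _).le
  have hle : Real.exp (-Φ (u i)) ≤ ∑ j, Real.exp (-Φ (u j)) :=
    single_le_sum (f := fun j => Real.exp (-Φ (u j))) (fun j _ => (Real.exp_pos _).le)
      (mem_univ i)
  have hexpM : Real.exp (-Φ M) = ∑ j, Real.exp (-Φ (u j)) := by
    rw [hM, one_div, Real.log_inv, neg_neg, Real.exp_log ((Real.exp_pos _).trans_le hle)]
  have hM0 : 0 < M := by
    rw [← hexpM, Real.exp_lt_exp, neg_lt_neg_iff] at hsep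
    exact hΦ.lt_iff_lt.mp hsep
  have hMu : M ≤ u i := by
    rw [← hexpM, Real.exp_le_exp, neg_le_neg_iff] at hle
    exact hΦ.le_iff_le.mp hle
  exact hψ hM0.le (hM0.le.trans hMu) hMu

theorem stmt_13_general {p d m : ℕ}
    (x : Fin m → E d) (y : Fin m → ℝ)
    (L : ℝ) (hL : 0 < L) (f : E p → E d → ℝ)
    (hf : ∀ x' : E d, ContDiff ℝ 1 fun θ => f θ x')
    (hhom : ∀ c : ℝ, 0 < c → ∀ (θ : E p) (x' : E d), f (c • θ) x' = c ^ L * f θ x')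
    (Φ : ℝ → ℝ)
    (hΦ' : ∀ u : ℝ, 0 < deriv Φ u)
    (hΦmono : MonotoneOn (fun u => u * deriv Φ u) (Set.Ici (0:ℝ)))
    (θ : E p) (hsep : PhiLoss Φ f x y θ < Real.exp (-Φ 0))
    (M : ℝ) (hM : Φ M = Real.log (1 / PhiLoss Φ f x y θ)) :
    (inner ℝ θ (-gradient (PhiLoss Φ f x y) θ) : ℝ) =
      L * ∑ i, Real.exp (-Φ (y i * f θ (x i))) * deriv Φ (y i * f θ (x i)) *
        (y i * f θ (x i)) ∧
    (inner ℝ θ (-gradient (PhiLoss Φ f x y) θ) : ℝ) ≥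
      L * PhiLoss Φ f x y θ * deriv Φ M * M := by
  -- `deriv Φ u` is the junk value `0` wherever `Φ` is not differentiable.
  have hΦ : Differentiable ℝ Φ := fun u => differentiableAt_of_deriv_ne_zero (hΦ' u).ne'
  have hinner : (inner ℝ θ (-gradient (PhiLoss Φ f x y) θ) : ℝ) =
      L * ∑ i, Real.exp (-Φ (y i * f θ (x i))) * deriv Φ (y i * f θ (x i)) *
        (y i * f θ (x i)) := by
    rw [inner_neg_right, inner_gradient_right, conj_trivial,
      fderiv_phiLoss_apply_self hΦ (fun i => (hf (x i)).differentiable one_ne_zero θ)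
        (fun c hc i => hhom c hc θ (x i)), neg_neg]
  have hsum := sum_exp_neg_mul_le_of_monotoneOn (u := fun i => y i * f θ (x i))
    (strictMono_of_deriv_pos hΦ') hΦmono hsep hM
  refine ⟨hinner, ?_⟩
  rw [hinner, ge_iff_le, mul_assoc, mul_assoc]
  refine mul_le_mul_of_nonneg_left ?_ hL.le
  calc PhiLoss Φ f x y θ * (deriv Φ M * M) = PhiLoss Φ f x y θ * (M * deriv Φ M) := by ring
    _ ≤ _ := hsum
    _ = _ := sum_congr rfl fun i _ => by ring

theorem stmt_13 {p d m : ℕ} (hp : 0 < p) (hd : 0 < d) (hm : 0 < m)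
    (x : Fin m → E d) (y : Fin m → ℝ) (hy : ∀ i, y i = 1 ∨ y i = -1)
    (L : ℝ) (hL : 0 < L) (f : E p → E d → ℝ)
    (hf : ∀ x' : E d, ContDiff ℝ 1 fun θ => f θ x')
    (hhom : ∀ c : ℝ, 0 < c → ∀ (θ : E p) (x' : E d), f (c • θ) x' = c ^ L * f θ x')
    (Φ : ℝ → ℝ) (hΦC1 : ContDiff ℝ 1 Φ) (hΦbij : Function.Bijective Φ)
    (hΦ' : ∀ u : ℝ, 0 < deriv Φ u)
    (hΦmono : MonotoneOn (fun u => u * deriv Φ u) (Set.Ici (0:ℝ)))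
    (θ : E p) (hsep : PhiLoss Φ f x y θ < Real.exp (-Φ 0))
    (M : ℝ) (hM : Φ M = Real.log (1 / PhiLoss Φ f x y θ)) :
    (inner ℝ θ (-gradient (PhiLoss Φ f x y) θ) : ℝ) =
      L * ∑ i, Real.exp (-Φ (y i * f θ (x i))) * deriv Φ (y i * f θ (x i)) *
        (y i * f θ (x i)) ∧
    (inner ℝ θ (-gradient (PhiLoss Φ f x y) θ) : ℝ) ≥
      L * PhiLoss Φ f x y θ * deriv Φ M * M :=
  stmt_13_general x y L hL f hf hhom Φ hΦ' hΦmono θ hsep M hM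
end
end

section
/- Let Φ : ℝ → ℝ be a continuously differentiable bijection with Φ'(u) > 0 for all u ∈ ℝ and such that u ↦ u·Φ'(u) is nondecreasing on [0, ∞). Let θ be a steepest-flow trajectory for 𝓛_Φ with respect to N, and let t0 ≥ 0 satisfy 𝓛_Φ(θ(t0)) < exp(−Φ(0)). Let t > t0 be such that θ(t) ≠ 0, ∇𝓛_Φ(θ(t)) ≠ 0, the function s ↦ N(θ(s)) is differentiable at t, and the function s ↦ log γ̃_Φ(θ(s)) is differentiable at t. Then (d/dt) log γ̃_Φ(θ(t)) ≥ L · N(θ'(t))² · ( (Φ^{−1})'(log(1/𝓛_Φ(θ(t)))) / (L · 𝓛_Φ(θ(t)) · Φ^{−1}(log(1/𝓛_Φ(θ(t))))) − 1/(N(θ(t)) · N(θ'(t))) ) ≥ 0. -/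
open Filter

noncomputable section

/-!
Along the flow the loss decreases at rate `N(θ')²`, so `log Φ⁻¹(log (1/𝓛))` increases at rate
`N(θ')² / (𝓛 · G · Φ'(G))` with `G = Φ⁻¹(log (1/𝓛))`, while `log N(θ)^L` grows at rate at most
`L · N(θ') / N(θ)`, since the norm of a curve grows no faster than the norm of its velocity.
The bracket is nonnegative by Euler's identity for the homogeneous `f`:
`⟨∇𝓛, θ⟩ = -L Σ uᵢ Φ'(uᵢ) exp (-Φ uᵢ)` with margins `uᵢ = yᵢ f(θ, xᵢ)`. Once `𝓛 < exp (-Φ 0)`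
(which persists since the loss decreases), every margin is at least `G > 0`, so monotonicity of
`u Φ'(u)` gives `L G Φ'(G) 𝓛 ≤ ⟨∇𝓛, -θ⟩ ≤ N_*(∇𝓛) N(θ) = N(θ') N(θ)`.
-/

open Function Real Topology

theorem HasGradientAt.comp_hasDerivAt {F : Type*} [NormedAddCommGroup F] [InnerProductSpace ℝ F]
    [CompleteSpace F] {g : F → ℝ} {g' : F} {γ : ℝ → F} {v : F} {s : ℝ}
    (hg : HasGradientAt g g' (γ s)) (hγ : HasDerivAt γ v s) :
    HasDerivAt (fun r => g (γ r)) (inner ℝ g' v) s := by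
  rw [← InnerProductSpace.toDual_apply_apply]
  exact hg.hasFDerivAt.comp_hasDerivAt s hγ

namespace IsNormOn

variable {p : ℕ} {N : E p → ℝ}

theorem map_zero_s14 (hN : IsNormOn N) : N 0 = 0 := (hN.2.1 0).2 rfl

theorem pos_s14 (hN : IsNormOn N) {v : E p} (hv : v ≠ 0) : 0 < N v :=
  (hN.1 v).lt_of_ne fun h => hv ((hN.2.1 v).1 h.symm)

theorem map_neg_s14 (hN : IsNormOn N) (v : E p) : N (-v) = N v := by
  simpa using hN.2.2.1 (-1) v

theorem sub_le (hN : IsNormOn N) (v w : E p) : N v - N w ≤ N (v - w) := by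
  simpa using hN.2.2.2 (v - w) w

theorem convexOn_s14 (hN : IsNormOn N) : ConvexOn ℝ Set.univ N := by
  refine ⟨convex_univ, fun v _ w _ a b ha hb _ => ?_⟩
  calc N (a • v + b • w) ≤ N (a • v) + N (b • w) := hN.2.2.2 _ _
    _ = a • N v + b • N w := by rw [hN.2.2.1, hN.2.2.1, abs_of_nonneg ha, abs_of_nonneg hb]; rfl

theorem continuous_s14 (hN : IsNormOn N) : Continuous N :=
  continuousOn_univ.1 (hN.convexOn_s14.continuousOn isOpen_univ)

theorem exists_norm_le_mul (hN : IsNormOn N) : ∃ C, 0 ≤ C ∧ ∀ v, ‖v‖ ≤ C * N v := by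
  have hcont : ContinuousOn (fun v => (N v)⁻¹) (Metric.sphere (0 : E p) 1) :=
    hN.continuous_s14.continuousOn.inv₀ fun v hv =>
      (hN.pos_s14 (ne_zero_of_mem_unit_sphere (⟨v, hv⟩ : Metric.sphere (0 : E p) 1))).ne'
  obtain ⟨C, hC⟩ := (isCompact_sphere (0 : E p) 1).bddAbove_image hcont
  refine ⟨max C 0, le_max_right _ _, fun v => ?_⟩
  rcases eq_or_ne v 0 with rfl | hv
  · simp [hN.map_zero_s14]
  have hv' : 0 < ‖v‖ := norm_pos_iff.2 hv
  have hsphere : ‖v‖⁻¹ • v ∈ Metric.sphere (0 : E p) 1 := by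
    simp [norm_smul, hv'.ne']
  have hle : ‖v‖ / N v ≤ C := by
    have : (N (‖v‖⁻¹ • v))⁻¹ ≤ C := hC ⟨_, hsphere, rfl⟩
    rwa [hN.2.2.1, abs_of_pos (inv_pos.2 hv'), mul_inv, inv_inv, ← div_eq_mul_inv] at this
  calc ‖v‖ = ‖v‖ / N v * N v := (div_mul_cancel₀ _ (hN.pos_s14 hv).ne').symm
    _ ≤ max C 0 * N v := mul_le_mul_of_nonneg_right (hle.trans (le_max_left _ _)) (hN.1 v)

theorem bddAbove_inner_image (hN : IsNormOn N) (z : E p) :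
    BddAbove ((fun v => (inner ℝ z v : ℝ)) '' {v | N v ≤ 1}) := by
  obtain ⟨C, hC0, hC⟩ := hN.exists_norm_le_mul
  refine ⟨‖z‖ * C, ?_⟩
  rintro _ ⟨v, hv, rfl⟩
  calc (inner ℝ z v : ℝ) ≤ ‖z‖ * ‖v‖ := real_inner_le_norm z v
    _ ≤ ‖z‖ * (C * N v) := by gcongr; exact hC v
    _ ≤ ‖z‖ * C := by
      rw [← mul_assoc]; exact mul_le_of_le_one_right (by positivity) hv

theorem inner_le_dualNorm_mul_s14 (hN : IsNormOn N) (z v : E p) :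
    (inner ℝ z v : ℝ) ≤ DualNorm N z * N v := by
  rcases eq_or_ne v 0 with rfl | hv
  · simp [hN.map_zero_s14]
  have hNv := hN.pos_s14 hv
  have hmem : (N v)⁻¹ • v ∈ {v | N v ≤ 1} := by
    simp [hN.2.2.1, abs_of_pos (inv_pos.2 hNv), hNv.ne']
  have hle : (N v)⁻¹ * inner ℝ z v ≤ DualNorm N z := by
    rw [← real_inner_smul_right]
    exact le_csSup (hN.bddAbove_inner_image z) ⟨_, hmem, rfl⟩
  rwa [inv_mul_le_iff₀ hNv, mul_comm] at hle

theorem deriv_comp_le (hN : IsNormOn N) {γ : ℝ → E p} {v : E p} {t : ℝ}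
    (hγ : HasDerivAt γ v t) (hn : DifferentiableAt ℝ (fun s => N (γ s)) t) :
    deriv (fun s => N (γ s)) t ≤ N v := by
  have hright : 𝓝[>] t ≤ 𝓝[≠] t := nhdsWithin_mono t fun s hs => ne_of_gt hs
  refine le_of_tendsto_of_tendsto
    ((hasDerivAt_iff_tendsto_slope.1 hn.hasDerivAt).mono_left hright)
    ((hN.continuous_s14.tendsto v).comp ((hasDerivAt_iff_tendsto_slope.1 hγ).mono_left hright)) ?_
  filter_upwards [self_mem_nhdsWithin] with s hs
  have hst : 0 < s - t := sub_pos.2 hs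
  calc slope (fun s => N (γ s)) t s = (N (γ s) - N (γ t)) / (s - t) := slope_def_field _ _ _
    _ ≤ N (γ s - γ t) / (s - t) := by gcongr; exact hN.sub_le _ _
    _ = N (slope γ t s) := by
      rw [slope_def_module, hN.2.2.1, abs_of_pos (inv_pos.2 hst), inv_mul_eq_div]

end IsNormOn

namespace StrictMono

variable {Φ : ℝ → ℝ}

theorem lt_invFun_iff (hΦ : StrictMono Φ) (hsurj : Surjective Φ) {u b : ℝ} :
    u < invFun Φ b ↔ Φ u < b := by
  rw [← hΦ.lt_iff_lt, invFun_eq (hsurj b)]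

theorem continuous_invFun (hΦ : StrictMono Φ) (hsurj : Surjective Φ) : Continuous (invFun Φ) :=
  Monotone.continuous_of_surjective
    (fun a b hab => by rwa [← hΦ.le_iff_le, invFun_eq (hsurj a), invFun_eq (hsurj b)])
    (leftInverse_invFun hΦ.injective).surjective

theorem hasDerivAt_invFun (hΦ : StrictMono Φ) (hsurj : Surjective Φ) {Φ' b : ℝ}
    (hd : HasDerivAt Φ Φ' (invFun Φ b)) (h0 : Φ' ≠ 0) : HasDerivAt (invFun Φ) Φ'⁻¹ b :=
  HasDerivAt.of_local_left_inverse (hΦ.continuous_invFun hsurj).continuousAt hd h0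
    (Eventually.of_forall fun b => invFun_eq (hsurj b))

end StrictMono

theorem HasDerivAt.log_div_rpow {g n : ℝ → ℝ} {g' n' t : ℝ} (L : ℝ) (hg : HasDerivAt g g' t)
    (hn : HasDerivAt n n' t) (hgt : g t ≠ 0) (hnt : 0 < n t) :
    HasDerivAt (fun s => Real.log (g s / n s ^ L)) (g' / g t - L * (n' / n t)) t := by
  refine ((hg.log hgt).sub ((hn.log hnt.ne').const_mul L)).congr_of_eventuallyEq ?_
  filter_upwards [hg.continuousAt.eventually_ne hgt, hn.continuousAt.eventually (lt_mem_nhds hnt)]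
    with s hgs hns
  rw [log_div hgs (rpow_pos_of_pos hns L).ne', log_rpow hns]
  rfl

theorem mul_deriv_mul_sum_le_sum {Φ : ℝ → ℝ} {ι : Type*} [Fintype ι] (u : ι → ℝ)
    (hΦ : StrictMono Φ) (hmono : MonotoneOn (fun u => u * deriv Φ u) (Set.Ici 0)) {G : ℝ}
    (hG : 0 ≤ G) (hΦG : Φ G = log (1 / ∑ i, exp (-Φ (u i)))) :
    G * deriv Φ G * ∑ i, exp (-Φ (u i)) ≤ ∑ i, u i * deriv Φ (u i) * exp (-Φ (u i)) := by
  have hGu : ∀ i, G ≤ u i := fun i => by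
    rw [← hΦ.le_iff_le, hΦG, one_div, log_inv, neg_le, ← log_exp (-Φ (u i))]
    exact log_le_log (exp_pos _) (Finset.single_le_sum (f := fun j => exp (-Φ (u j)))
      (fun j _ => (exp_pos _).le) (Finset.mem_univ i))
  rw [Finset.mul_sum]
  exact Finset.sum_le_sum fun i _ =>
    mul_le_mul_of_nonneg_right (hmono hG (hG.trans (hGu i)) (hGu i)) (exp_pos _).le

theorem hasDerivAt_sum_exp_neg_comp_rpow {Φ : ℝ → ℝ} {ι : Type*} [Fintype ι] (u : ι → ℝ)
    (hΦ : Differentiable ℝ Φ) (L : ℝ) :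
    HasDerivAt (fun c : ℝ => ∑ i, exp (-Φ (c ^ L * u i)))
      (-(L * ∑ i, u i * deriv Φ (u i) * exp (-Φ (u i)))) 1 := by
  have hterm : ∀ i, HasDerivAt (fun c : ℝ => exp (-Φ (c ^ L * u i)))
      (exp (-Φ (u i)) * -(deriv Φ (u i) * (L * u i))) 1 := fun i => by
    have hpow : HasDerivAt (fun c : ℝ => c ^ L * u i) (L * u i) 1 := by
      simpa using (hasDerivAt_rpow_const (x := 1) (p := L) (Or.inl one_ne_zero)).mul_const (u i)
    have hΦi : HasDerivAt Φ (deriv Φ (u i)) ((1 : ℝ) ^ L * u i) := by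
      rw [one_rpow, one_mul]; exact (hΦ _).hasDerivAt
    simpa using ((hΦi.comp 1 hpow).neg).exp
  have hval : ∑ i, exp (-Φ (u i)) * -(deriv Φ (u i) * (L * u i)) =
      -(L * ∑ i, u i * deriv Φ (u i) * exp (-Φ (u i))) := by
    rw [Finset.mul_sum, ← Finset.sum_neg_distrib]
    exact Finset.sum_congr rfl fun i _ => by ring
  rw [← hval]
  exact HasDerivAt.fun_sum fun i _ => hterm i

section PhiLoss

variable {p d m : ℕ} {Φ : ℝ → ℝ} {f : E p → E d → ℝ} {x : Fin m → E d} {y : Fin m → ℝ} {L : ℝ}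

theorem phiLoss_pos (hm : 0 < m) (θ : E p) : 0 < PhiLoss Φ f x y θ :=
  Finset.sum_pos (fun _ _ => exp_pos _) (Finset.univ_nonempty_iff.2 ⟨⟨0, hm⟩⟩)

theorem differentiable_phiLoss (hf : ∀ x', Differentiable ℝ fun θ => f θ x')
    (hΦ : Differentiable ℝ Φ) : Differentiable ℝ (PhiLoss Φ f x y) := by
  have := fun i => hf (x i)
  unfold PhiLoss
  fun_prop

theorem phiLoss_smul
    (hhom : ∀ c : ℝ, 0 < c → ∀ (θ : E p) (x' : E d), f (c • θ) x' = c ^ L * f θ x')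
    {c : ℝ} (hc : 0 < c) (θ : E p) :
    PhiLoss Φ f x y (c • θ) = ∑ i, exp (-Φ (c ^ L * (y i * f θ (x i)))) := by
  simp only [PhiLoss, hhom c hc, mul_left_comm]

theorem inner_gradient_phiLoss_self (hf : ∀ x', Differentiable ℝ fun θ => f θ x')
    (hΦ : Differentiable ℝ Φ)
    (hhom : ∀ c : ℝ, 0 < c → ∀ (θ : E p) (x' : E d), f (c • θ) x' = c ^ L * f θ x') (θ : E p) :
    inner ℝ (gradient (PhiLoss Φ f x y) θ) θ =
      -(L * ∑ i, y i * f θ (x i) * deriv Φ (y i * f θ (x i)) * exp (-Φ (y i * f θ (x i)))) := by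
  have hgrad : HasGradientAt (PhiLoss Φ f x y) (gradient (PhiLoss Φ f x y) θ) ((1 : ℝ) • θ) := by
    rw [one_smul]; exact (differentiable_phiLoss hf hΦ θ).hasGradientAt
  have hray := hgrad.comp_hasDerivAt (by simpa using (hasDerivAt_id (1 : ℝ)).smul_const θ)
  refine hray.unique ((hasDerivAt_sum_exp_neg_comp_rpow _ hΦ L).congr_of_eventuallyEq ?_)
  filter_upwards [Ioi_mem_nhds one_pos] with c hc
  exact phiLoss_smul hhom hc θ

theorem mul_phiLoss_le_mul_dualNorm {N : E p → ℝ} (hN : IsNormOn N) (hL : 0 ≤ L)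
    (hf : ∀ x', Differentiable ℝ fun θ => f θ x')
    (hhom : ∀ c : ℝ, 0 < c → ∀ (θ : E p) (x' : E d), f (c • θ) x' = c ^ L * f θ x')
    (hΦ : StrictMono Φ) (hsurj : Surjective Φ) (hΦd : Differentiable ℝ Φ)
    (hmono : MonotoneOn (fun u => u * deriv Φ u) (Set.Ici 0)) {θ : E p}
    (hG : 0 ≤ invFun Φ (log (1 / PhiLoss Φ f x y θ))) :
    L * (invFun Φ (log (1 / PhiLoss Φ f x y θ)) *
        deriv Φ (invFun Φ (log (1 / PhiLoss Φ f x y θ))) * PhiLoss Φ f x y θ) ≤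
      N θ * DualNorm N (gradient (PhiLoss Φ f x y) θ) :=
  calc _ ≤ L * ∑ i, y i * f θ (x i) * deriv Φ (y i * f θ (x i)) * exp (-Φ (y i * f θ (x i))) :=
        mul_le_mul_of_nonneg_left
          (mul_deriv_mul_sum_le_sum _ hΦ hmono hG (invFun_eq (hsurj _))) hL
    _ = inner ℝ (gradient (PhiLoss Φ f x y) θ) (-θ) := by
        rw [inner_neg_right, inner_gradient_phiLoss_self hf hΦd hhom, neg_neg]
    _ ≤ DualNorm N (gradient (PhiLoss Φ f x y) θ) * N (-θ) := hN.inner_le_dualNorm_mul_s14 _ _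
    _ = _ := by rw [hN.map_neg_s14, mul_comm]

end PhiLoss

namespace IsSteepestFlow

variable {p : ℕ} {N 𝓛 : E p → ℝ} {θ θ' : ℝ → E p}

theorem hasDerivAt_loss (hflow : IsSteepestFlow N 𝓛 θ θ') {s : ℝ} (hs : 0 ≤ s)
    (h𝓛 : DifferentiableAt ℝ 𝓛 (θ s)) :
    HasDerivAt (fun r => 𝓛 (θ r)) (-N (θ' s) ^ 2) s := by
  obtain ⟨hθ, hinner, hnorm⟩ := hflow s hs
  have := h𝓛.hasGradientAt.comp_hasDerivAt hθ
  rwa [real_inner_comm, hinner, ← hnorm] at this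

theorem antitoneOn_loss (hflow : IsSteepestFlow N 𝓛 θ θ') (h𝓛 : Differentiable ℝ 𝓛) :
    AntitoneOn (fun r => 𝓛 (θ r)) (Set.Ici 0) := by
  have hderiv := fun s (hs : s ∈ Set.Ici (0 : ℝ)) => hflow.hasDerivAt_loss hs (h𝓛 _)
  refine antitoneOn_of_deriv_nonpos (convex_Ici 0)
    (fun s hs => (hderiv s hs).continuousAt.continuousWithinAt) (fun s hs => ?_) fun s hs => ?_
  · exact (hderiv s (interior_subset hs)).differentiableAt.differentiableWithinAt
  · rw [(hderiv s (interior_subset hs)).deriv]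
    exact neg_nonpos.2 (sq_nonneg _)

theorem hasDerivAt_log_phiSoftMargin (hflow : IsSteepestFlow N 𝓛 θ θ') {Φ : ℝ → ℝ}
    (hΦ : StrictMono Φ) (hsurj : Surjective Φ) (L : ℝ) {t : ℝ} (ht : 0 ≤ t)
    (h𝓛 : DifferentiableAt ℝ 𝓛 (θ t)) (h𝓛pos_s14 : 0 < 𝓛 (θ t))
    (hΦd : DifferentiableAt ℝ Φ (invFun Φ (log (1 / 𝓛 (θ t)))))
    (hΦ0 : deriv Φ (invFun Φ (log (1 / 𝓛 (θ t)))) ≠ 0)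
    (hG : invFun Φ (log (1 / 𝓛 (θ t))) ≠ 0) (hNθ : 0 < N (θ t))
    (hn : DifferentiableAt ℝ (fun s => N (θ s)) t) :
    HasDerivAt (fun s => log (PhiSoftMargin N Φ 𝓛 L (θ s)))
      ((deriv Φ (invFun Φ (log (1 / 𝓛 (θ t)))))⁻¹ * (N (θ' t) ^ 2 / 𝓛 (θ t)) /
          invFun Φ (log (1 / 𝓛 (θ t))) - L * (deriv (fun s => N (θ s)) t / N (θ t))) t := by
  have hlog : HasDerivAt (fun s => log (1 / 𝓛 (θ s))) (N (θ' t) ^ 2 / 𝓛 (θ t)) t := by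
    have h := ((hflow.hasDerivAt_loss ht h𝓛).log h𝓛pos_s14.ne').fun_neg
    rw [neg_div, neg_neg] at h
    simpa only [one_div, log_inv] using h
  have hinv := hΦ.hasDerivAt_invFun hsurj hΦd.hasDerivAt hΦ0
  have hc := HasDerivAt.comp t hinv hlog
  exact hc.log_div_rpow L hn.hasDerivAt hG hNθ

end IsSteepestFlow

theorem log_margin_rate_bounds {L a ℓ G n w n' : ℝ} (hL : 0 < L) (ha : 0 < a) (hℓ : 0 < ℓ)
    (hG : 0 < G) (hn : 0 < n) (hn' : n' ≤ w) (hkey : L * (G * a * ℓ) ≤ n * w) :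
    a⁻¹ * (w ^ 2 / ℓ) / G - L * (n' / n) ≥ L * w ^ 2 * (a⁻¹ / (L * ℓ * G) - 1 / (n * w)) ∧
      L * w ^ 2 * (a⁻¹ / (L * ℓ * G) - 1 / (n * w)) ≥ 0 := by
  have hkey0 : 0 < L * (G * a * ℓ) := by positivity
  have hw : 0 < w := pos_of_mul_pos_right (hkey0.trans_le hkey) hn.le
  have hbracket : 1 / (n * w) ≤ a⁻¹ / (L * ℓ * G) :=
    calc 1 / (n * w) ≤ 1 / (L * (G * a * ℓ)) := one_div_le_one_div_of_le hkey0 hkey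
      _ = a⁻¹ / (L * ℓ * G) := by field_simp
  refine ⟨?_, mul_nonneg (by positivity) (sub_nonneg.2 hbracket)⟩
  have hexpand : L * w ^ 2 * (a⁻¹ / (L * ℓ * G) - 1 / (n * w)) =
      a⁻¹ * (w ^ 2 / ℓ) / G - L * (w / n) := by
    field_simp
  rw [hexpand, ge_iff_le]
  gcongr

theorem stmt_14_general {p d m : ℕ} (hm : 0 < m)
    (x : Fin m → E d) (y : Fin m → ℝ)
    (L : ℝ) (hL : 0 < L) (f : E p → E d → ℝ)
    (hf : ∀ x' : E d, ContDiff ℝ 1 fun θ => f θ x')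
    (hhom : ∀ c : ℝ, 0 < c → ∀ (θ : E p) (x' : E d), f (c • θ) x' = c ^ L * f θ x')
    (N : E p → ℝ) (hN : IsNormOn N)
    (Φ : ℝ → ℝ) (hΦbij : Function.Bijective Φ)
    (hΦ' : ∀ u : ℝ, 0 < deriv Φ u)
    (hΦmono : MonotoneOn (fun u => u * deriv Φ u) (Set.Ici (0:ℝ)))
    (θ θ' : ℝ → E p) (hflow : IsSteepestFlow N (PhiLoss Φ f x y) θ θ')
    (t0 : ℝ) (ht0 : 0 ≤ t0) (hsep : PhiLoss Φ f x y (θ t0) < Real.exp (-Φ 0))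
    (t : ℝ) (ht : t0 < t) (hθ0 : θ t ≠ 0)
    (hNdiff : DifferentiableAt ℝ (fun s => N (θ s)) t) :
    deriv (fun s => Real.log (PhiSoftMargin N Φ (PhiLoss Φ f x y) L (θ s))) t ≥
      L * (N (θ' t)) ^ 2 *
        (deriv (Function.invFun Φ) (Real.log (1 / PhiLoss Φ f x y (θ t))) /
            (L * PhiLoss Φ f x y (θ t) *
              Function.invFun Φ (Real.log (1 / PhiLoss Φ f x y (θ t)))) -
          1 / (N (θ t) * N (θ' t))) ∧
    L * (N (θ' t)) ^ 2 *
        (deriv (Function.invFun Φ) (Real.log (1 / PhiLoss Φ f x y (θ t))) /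
            (L * PhiLoss Φ f x y (θ t) *
              Function.invFun Φ (Real.log (1 / PhiLoss Φ f x y (θ t)))) -
          1 / (N (θ t) * N (θ' t))) ≥ 0 := by
  set 𝓛 := PhiLoss Φ f x y
  have hΦ : StrictMono Φ := strictMono_of_deriv_pos hΦ'
  have hΦd : Differentiable ℝ Φ := fun u => differentiableAt_of_deriv_ne_zero (hΦ' u).ne'
  have hfd : ∀ x', Differentiable ℝ fun θ => f θ x' := fun x' => (hf x').differentiable one_ne_zero
  have h𝓛d : Differentiable ℝ 𝓛 := differentiable_phiLoss hfd hΦd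
  have ht' : 0 ≤ t := ht0.trans ht.le
  have h𝓛pos_s14 : 0 < 𝓛 (θ t) := phiLoss_pos hm (θ t)
  have hG : 0 < invFun Φ (log (1 / 𝓛 (θ t))) := by
    rw [hΦ.lt_invFun_iff hΦbij.2, one_div, log_inv, lt_neg, ← log_exp (-Φ 0)]
    exact log_lt_log h𝓛pos_s14 ((hflow.antitoneOn_loss h𝓛d ht0 ht' ht.le).trans_lt hsep)
  have hkey := mul_phiLoss_le_mul_dualNorm hN hL.le hfd hhom hΦ hΦbij.2 hΦd hΦmono hG.le
  rw [← (hflow t ht').2.2] at hkey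
  rw [(hflow.hasDerivAt_log_phiSoftMargin hΦ hΦbij.2 L ht' (h𝓛d _) h𝓛pos_s14 (hΦd _) (hΦ' _).ne'
      hG.ne' (hN.pos_s14 hθ0) hNdiff).deriv,
    (hΦ.hasDerivAt_invFun hΦbij.2 (hΦd _).hasDerivAt (hΦ' _).ne').deriv]
  exact log_margin_rate_bounds hL (hΦ' _) h𝓛pos_s14 hG (hN.pos_s14 hθ0)
    (hN.deriv_comp_le (hflow t ht').1 hNdiff) hkey

theorem stmt_14 {p d m : ℕ} (hp : 0 < p) (hd : 0 < d) (hm : 0 < m)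
    (x : Fin m → E d) (y : Fin m → ℝ) (hy : ∀ i, y i = 1 ∨ y i = -1)
    (L : ℝ) (hL : 0 < L) (f : E p → E d → ℝ)
    (hf : ∀ x' : E d, ContDiff ℝ 1 fun θ => f θ x')
    (hhom : ∀ c : ℝ, 0 < c → ∀ (θ : E p) (x' : E d), f (c • θ) x' = c ^ L * f θ x')
    (N : E p → ℝ) (hN : IsNormOn N)
    (Φ : ℝ → ℝ) (hΦC1 : ContDiff ℝ 1 Φ) (hΦbij : Function.Bijective Φ)
    (hΦ' : ∀ u : ℝ, 0 < deriv Φ u)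
    (hΦmono : MonotoneOn (fun u => u * deriv Φ u) (Set.Ici (0:ℝ)))
    (θ θ' : ℝ → E p) (hflow : IsSteepestFlow N (PhiLoss Φ f x y) θ θ')
    (t0 : ℝ) (ht0 : 0 ≤ t0) (hsep : PhiLoss Φ f x y (θ t0) < Real.exp (-Φ 0))
    (t : ℝ) (ht : t0 < t) (hθ0 : θ t ≠ 0)
    (hg0 : gradient (PhiLoss Φ f x y) (θ t) ≠ 0)
    (hNdiff : DifferentiableAt ℝ (fun s => N (θ s)) t)
    (hγdiff : DifferentiableAt ℝ
      (fun s => Real.log (PhiSoftMargin N Φ (PhiLoss Φ f x y) L (θ s))) t) :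
    deriv (fun s => Real.log (PhiSoftMargin N Φ (PhiLoss Φ f x y) L (θ s))) t ≥
      L * (N (θ' t)) ^ 2 *
        (deriv (Function.invFun Φ) (Real.log (1 / PhiLoss Φ f x y (θ t))) /
            (L * PhiLoss Φ f x y (θ t) *
              Function.invFun Φ (Real.log (1 / PhiLoss Φ f x y (θ t)))) -
          1 / (N (θ t) * N (θ' t))) ∧
    L * (N (θ' t)) ^ 2 *
        (deriv (Function.invFun Φ) (Real.log (1 / PhiLoss Φ f x y (θ t))) /
            (L * PhiLoss Φ f x y (θ t) *
              Function.invFun Φ (Real.log (1 / PhiLoss Φ f x y (θ t)))) -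
          1 / (N (θ t) * N (θ' t))) ≥ 0 :=
  stmt_14_general hm x y L hL f hf hhom N hN Φ hΦbij hΦ' hΦmono θ θ' hflow t0 ht0 hsep t ht hθ0
    hNdiff
end
end
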